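/- arXiv:1004.4115 — 7 statements merged into one kernel-verified Lean document; each statement's English description precedes it below -/
import Mathlib

section
/- If π : C → D is a covering functor between k-linear Krull–Schmidt categories inducing bijections ⊕_{Y : FY ≅ A} C(X,Y) → D(FX, A), and T̄ is a rigid object in D (i.e., Ext¹(T̄, T̄) = 0 interpreted as Hom(T̄, T̄[1]) = 0 in a triangulated setting), then the lift T = π^{-1}(T̄) is rigid in C: Hom_C(T, T[1]) = 0. -/
open CategoryTheory Limits

/-- A covering functor between triangulated (here: additive categories with shift)
categories lifts rigidity: if `π : C ⥤ D` induces bijections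
`⊕_{Y ∈ π⁻¹(A)} C(X, Y) ≅ D(πX, A)` (the fibres `fib A` enumerating, up to isomorphism,
all objects of `C` lying over `A`, and every object of `C` lying in some fibre),
`T̄` is rigid in `D` (`Hom(T̄, T̄[1]) = 0`) and `T` lifts `add T̄`
(so `π(T)` is a finite direct sum of copies of `T̄`), then `Hom_C(T, T[1]) = 0`. -/
theorem rigid_lift {C D : Type*} [Category C] [Category D]
    [Preadditive C] [Preadditive D] [HasShift C ℤ] [HasShift D ℤ]
    [HasFiniteBiproducts D]
    (π : C ⥤ D) [π.Additive] [π.CommShift ℤ]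
    {ι : Type*} [DecidableEq ι]
    (fib : D → ι → C) (e : ∀ (A : D) (i : ι), π.obj (fib A i) ≅ A)
    (hcov : ∀ (X : C) (A : D), Function.Bijective
      (DFinsupp.sumAddHom (β := fun i : ι => X ⟶ fib A i)
        (fun i =>
          ((Preadditive.rightComp (π.obj X) (e A i).hom).comp π.mapAddHom))))
    (hfib : ∀ Y : C, ∃ (A : D) (i : ι), Nonempty (Y ≅ fib A i))
    (Tbar : D) (hTbar : ∀ f : Tbar ⟶ Tbar⟦(1 : ℤ)⟧, f = 0)
    (T : C) (n : ℕ) (hT : π.obj T ≅ ⨁ (fun _ : Fin n => Tbar)) :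
    ∀ f : T ⟶ T⟦(1 : ℤ)⟧, f = 0 := by
  intro f
  -- The shift functor on `D` is additive (it is an equivalence between preadditive
  -- categories with binary biproducts).
  have hadd : (shiftFunctor D (1 : ℤ)).Additive := by
    have : HasBinaryBiproducts D := hasBinaryBiproducts_of_finite_biproducts D
    have := preservesBinaryBiproducts_of_preservesBinaryProducts (shiftFunctor D (1 : ℤ))
    exact Functor.additive_of_preservesBinaryBiproducts _
  -- Step 1: `π.map f = 0`.
  set S := shiftFunctor D (1 : ℤ)
  let s : π.obj (T⟦(1 : ℤ)⟧) ⟶ S.obj (π.obj T) := (π.commShiftIso (1 : ℤ)).hom.app T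
  let g : (⨁ fun _ : Fin n => Tbar) ⟶ S.obj (⨁ fun _ : Fin n => Tbar) :=
    hT.inv ≫ π.map f ≫ s ≫ S.map hT.hom
  have hg : g = 0 := by
    have hid : g = g ≫ S.map (∑ j : Fin n, biproduct.π (fun _ : Fin n => Tbar) j ≫
        biproduct.ι (fun _ : Fin n => Tbar) j) := by
      rw [biproduct.total]; simp
    rw [hid, S.map_sum, Preadditive.comp_sum]
    refine Finset.sum_eq_zero fun j _ => ?_
    have hzero : g ≫ S.map (biproduct.π (fun _ : Fin n => Tbar) j) = 0 := by
      apply biproduct.hom_ext'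
      intro i
      rw [comp_zero]
      exact hTbar _
    rw [S.map_comp, ← Category.assoc, hzero, zero_comp]
  have hπf : π.map f = 0 := by
    have : π.map f = hT.hom ≫ g ≫ S.map hT.inv ≫ (π.commShiftIso (1 : ℤ)).inv.app T := by
      simp [g, s, ← S.map_comp_assoc]
    rw [this, hg]
    simp
  -- Step 2: use injectivity of the covering map to conclude `f = 0`.
  obtain ⟨A, i, ⟨u⟩⟩ := hfib (T⟦(1 : ℤ)⟧)
  have hinj := (hcov T A).injective
  have himg : (DFinsupp.sumAddHom (β := fun i : ι => T ⟶ fib A i)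
      (fun i => ((Preadditive.rightComp (π.obj T) (e A i).hom).comp π.mapAddHom)))
      (DFinsupp.single i (f ≫ u.hom)) = 0 := by
    rw [DFinsupp.sumAddHom_single]
    simp [hπf]
  have h0 : (DFinsupp.single i (f ≫ u.hom) :
      Π₀ i : ι, (T ⟶ fib A i)) = 0 := by
    apply hinj
    rw [himg, map_zero]
  have : f ≫ u.hom = 0 := by
    have := DFinsupp.ext_iff.mp h0 i
    simpa using this
  have := this =≫ u.inv
  simpa using this
end

section
/- Let π : C → D be a Galois covering of Hom-finite triangulated categories (D = C/G) and let T̄ be a cluster-tilting object in D (meaning Hom(T̄, T̄[1]) = 0 and any X with Hom(T̄, X[1]) = 0 lies in add T̄). Then the orbit lift T of T̄ in C is a cluster-tilting object in C. -/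
open CategoryTheory Limits

/-- `X` belongs to `add T`: it is a direct summand of a finite direct sum of
copies of `T`. -/
def MemAdd {C : Type*} [Category C] [Preadditive C] [HasFiniteBiproducts C]
    (X T : C) : Prop :=
  ∃ (n : ℕ) (s : X ⟶ ⨁ (fun _ : Fin n => T)) (r : (⨁ (fun _ : Fin n => T)) ⟶ X),
    s ≫ r = 𝟙 X

/-- `T` is a cluster-tilting object of the 2-CY triangulated category `C`:
`Hom(T, T[1]) = 0` and every `X` with `Hom(T, X[1]) = 0` lies in `add T`. -/
def IsClusterTilting {C : Type*} [Category C] [Preadditive C] [HasShift C ℤ]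
    [HasFiniteBiproducts C] (T : C) : Prop :=
  (∀ f : T ⟶ T⟦(1 : ℤ)⟧, f = 0) ∧
  ∀ X : C, (∀ f : T ⟶ X⟦(1 : ℤ)⟧, f = 0) → MemAdd X T

/-!
The covering bijections `⊕ᵢ C(X, Yᵢ) ≅ D(πX, A)` show that `π f = 0` forces `f = 0`, so `T` is
rigid because `πT ∈ add T̄` is. If `Hom(T, X[1]) = 0`, then `Hom(T̄, π(X[1])) = 0`, since by the
dual bijection every such map is a sum of images of maps out of lifts of `T̄`, which are summands
of `T`; hence `πX ∈ add T̄`. Writing the isomorphism `πX ≅ A` as a sum of maps factoring through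
`T̄` and lifting both factors of each, the lifted identity of `X` becomes a sum of maps factoring
through lifts of `T̄`, hence through `T`, so `X ∈ add T`.
-/

section AddClosure

variable {C : Type*} [Category C] [Preadditive C]

def sumsThrough (T X Y : C) : AddSubmonoid (X ⟶ Y) where
  carrier := {f | ∃ (N : ℕ) (a : Fin N → (X ⟶ T)) (b : Fin N → (T ⟶ Y)), ∑ i, a i ≫ b i = f}
  zero_mem' := ⟨0, Fin.elim0, Fin.elim0, by simp⟩
  add_mem' := by
    rintro _ _ ⟨N₁, a₁, b₁, rfl⟩ ⟨N₂, a₂, b₂, rfl⟩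
    exact ⟨N₁ + N₂, Fin.append a₁ a₂, Fin.append b₁ b₂, by simp [Fin.sum_univ_add]⟩

lemma sumsThrough_le {T X Y : C} {M : AddSubmonoid (X ⟶ Y)}
    (h : ∀ (a : X ⟶ T) (b : T ⟶ Y), a ≫ b ∈ M) : sumsThrough T X Y ≤ M := by
  rintro _ ⟨N, a, b, rfl⟩
  exact M.sum_mem fun i _ => h (a i) (b i)

variable [HasFiniteBiproducts C]

lemma memAdd_of_iso_biproduct {T X : C} {n : ℕ} (w : X ≅ ⨁ fun _ : Fin n => T) : MemAdd X T :=
  ⟨n, w.hom, w.inv, w.hom_inv_id⟩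

lemma MemAdd.of_iso {T X Z : C} (w : X ≅ Z) (h : MemAdd Z T) : MemAdd X T := by
  obtain ⟨n, s, r, hsr⟩ := h
  exact ⟨n, w.hom ≫ s, r ≫ w.inv, by simp [reassoc_of% hsr]⟩

lemma MemAdd.map {D : Type*} [Category D] [Preadditive D] [HasFiniteBiproducts D]
    (F : C ⥤ D) [F.Additive] {T X : C} (h : MemAdd X T) : MemAdd (F.obj X) (F.obj T) := by
  obtain ⟨n, s, r, hsr⟩ := h
  refine ⟨n, F.map s ≫ (F.mapBiproduct _).hom, (F.mapBiproduct _).inv ≫ F.map r, ?_⟩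
  rw [Category.assoc, Iso.hom_inv_id_assoc, ← F.map_comp, hsr, F.map_id]

lemma MemAdd.shift [HasShift C ℤ] {T X : C} (h : MemAdd X T) (n : ℤ) :
    MemAdd (X⟦n⟧) (T⟦n⟧) := by
  have : (shiftFunctor C n).Additive := Functor.additive_of_preserves_binary_products _
  exact h.map _

lemma MemAdd.eq_zero_of_hom_from {T X W : C} (h : MemAdd X T) (hT : ∀ f : T ⟶ W, f = 0)
    (g : X ⟶ W) : g = 0 := by
  obtain ⟨n, s, r, hsr⟩ := h
  have hr : r ≫ g = 0 := biproduct.hom_ext' _ _ fun j => by simpa using hT _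
  rw [← Category.id_comp g, ← hsr, Category.assoc, hr, comp_zero]

lemma MemAdd.eq_zero_of_hom_to {T X W : C} (h : MemAdd X T) (hT : ∀ f : W ⟶ T, f = 0)
    (g : W ⟶ X) : g = 0 := by
  obtain ⟨n, s, r, hsr⟩ := h
  have hs : g ≫ s = 0 := biproduct.hom_ext _ _ fun j => by simpa using hT _
  rw [← Category.comp_id g, ← hsr, ← Category.assoc, hs, zero_comp]

lemma comp_mem_sumsThrough {T X Y Z : C} (h : MemAdd Z T) (u : X ⟶ Z) (v : Z ⟶ Y) :
    u ≫ v ∈ sumsThrough T X Y := by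
  obtain ⟨n, s, r, hsr⟩ := h
  refine ⟨n, fun j => u ≫ s ≫ biproduct.π (fun _ : Fin n => T) j,
    fun j => biproduct.ι (fun _ : Fin n => T) j ≫ r ≫ v, ?_⟩
  have huv : u ≫ v = (u ≫ s) ≫ 𝟙 _ ≫ r ≫ v := by simp [reassoc_of% hsr]
  rw [huv, ← biproduct.total, Preadditive.sum_comp, Preadditive.comp_sum]
  simp only [Category.assoc]

lemma memAdd_of_id_mem_sumsThrough {T X : C} (h : 𝟙 X ∈ sumsThrough T X X) : MemAdd X T := by
  obtain ⟨N, a, b, hab⟩ := h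
  exact ⟨N, biproduct.lift a, biproduct.desc b, by rw [biproduct.lift_desc, hab]⟩

end AddClosure

section GaloisCovering

variable {C D : Type*} [Category C] [Category D] [Preadditive C] [Preadditive D]
  (π : C ⥤ D) [π.Additive] {ι : Type*} [DecidableEq ι] (fib : D → ι → C)
  (e : ∀ (A : D) (i : ι), π.obj (fib A i) ≅ A)

/-- The maps `⊕ᵢ C(X, fib A i) → D(πX, A)` and `⊕ᵢ C(fib A i, X) → D(A, πX)` of the covering. -/
def coverHomTo (X : C) (A : D) : (Π₀ i, X ⟶ fib A i) →+ (π.obj X ⟶ A) :=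
  DFinsupp.sumAddHom fun i => (Preadditive.rightComp (π.obj X) (e A i).hom).comp π.mapAddHom

def coverHomFrom (X : C) (A : D) : (Π₀ i, fib A i ⟶ X) →+ (A ⟶ π.obj X) :=
  DFinsupp.sumAddHom fun i => (Preadditive.leftComp (π.obj X) (e A i).inv).comp π.mapAddHom

@[simp]
lemma coverHomTo_single (X : C) (A : D) (i : ι) (x : X ⟶ fib A i) :
    coverHomTo π fib e X A (DFinsupp.single i x) = π.map x ≫ (e A i).hom :=
  DFinsupp.sumAddHom_single _ _ _

lemma coverHomTo_mapRange_comp {X Y : C} (u : X ⟶ Y) {A : D} (d : Π₀ i, Y ⟶ fib A i) :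
    coverHomTo π fib e X A (d.mapRange (fun _ x => u ≫ x) fun _ => comp_zero) =
      π.map u ≫ coverHomTo π fib e Y A d := by
  have := DFinsupp.addHom_ext
    (f := (coverHomTo π fib e X A).comp
      (DFinsupp.mapRange.addMonoidHom fun i => Preadditive.leftComp (fib A i) u))
    (g := (Preadditive.leftComp A (π.map u)).comp (coverHomTo π fib e Y A))
    (fun i x => by simp [Preadditive.leftComp])
  exact DFunLike.congr_fun this d

open scoped Classical in
lemma coverHomTo_comp {A B : D} (q : A ⟶ B) (b : ∀ i, Π₀ j, fib A i ⟶ fib B j)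
    (hb : ∀ i, coverHomTo π fib e (fib A i) B (b i) = (e A i).hom ≫ q)
    {X : C} (a : Π₀ i, X ⟶ fib A i) :
    coverHomTo π fib e X A a ≫ q = coverHomTo π fib e X B
      (a.sum fun i ai => (b i).mapRange (fun _ x => ai ≫ x) fun _ => comp_zero) := by
  simp only [map_dfinsuppSum, coverHomTo_mapRange_comp, hb]
  rw [coverHomTo, DFinsupp.sumAddHom_apply, DFinsupp.sum, DFinsupp.sum, Preadditive.sum_comp]
  simp [Preadditive.rightComp]

lemma eq_zero_of_map_eq_zero (hfib : ∀ Y : C, ∃ (A : D) (i : ι), Nonempty (Y ≅ fib A i))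
    (hcov : ∀ X A, Function.Injective (coverHomTo π fib e X A))
    {X Y : C} (f : X ⟶ Y) (hf : π.map f = 0) : f = 0 := by
  obtain ⟨A, i, ⟨w⟩⟩ := hfib Y
  have : DFinsupp.single (β := fun j => X ⟶ fib A j) i (f ≫ w.hom) = 0 :=
    hcov X A (by simp [hf])
  simpa using this

lemma eq_zero_of_forall_fib_eq_zero {X : C} {A : D}
    (hcov' : Function.Surjective (coverHomFrom π fib e X A))
    (h : ∀ i (g : fib A i ⟶ X), g = 0) (f : A ⟶ π.obj X) : f = 0 := by
  obtain ⟨d, rfl⟩ := hcov' f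
  rw [show d = 0 from DFinsupp.ext fun i => h i (d i), map_zero]

variable [HasFiniteBiproducts C] [HasFiniteBiproducts D]

lemma memAdd_fib_of_memAdd (hcov : ∀ X A, Function.Bijective (coverHomTo π fib e X A))
    {T : C} {Tbar A : D} (hT : ∀ i, MemAdd (fib Tbar i) T) (hA : MemAdd A Tbar) (i₀ : ι) :
    MemAdd (fib A i₀) T := by
  classical
  set X := fib A i₀
  let S : AddSubmonoid (Π₀ j, X ⟶ fib A j) :=
    { carrier := {d | ∀ j, d j ∈ sumsThrough T X (fib A j)}
      zero_mem' := fun j => zero_mem _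
      add_mem' := fun hd hd' j => add_mem (hd j) (hd' j) }
  have hS : sumsThrough Tbar (π.obj X) A ≤ S.map (coverHomTo π fib e X A) := by
    refine sumsThrough_le fun p q => ?_
    obtain ⟨a, rfl⟩ := (hcov X Tbar).2 p
    choose b hb using fun i => (hcov (fib Tbar i) A).2 ((e Tbar i).hom ≫ q)
    refine ⟨_, ?_, (coverHomTo_comp π fib e q b hb a).symm⟩
    intro j
    simp only [DFinsupp.sum_apply, DFinsupp.mapRange_apply]
    exact dfinsuppSum_mem _ _ _ fun i _ => comp_mem_sumsThrough (hT i) _ _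
  obtain ⟨d, hdS, hd⟩ := hS (comp_mem_sumsThrough hA (e A i₀).hom (𝟙 A))
  have : d = DFinsupp.single i₀ (𝟙 X) := (hcov X A).1 (by simp [hd])
  apply memAdd_of_id_mem_sumsThrough
  simpa [this] using hdS i₀

end GaloisCovering

theorem clusterTilting_lift_general {C D : Type*} [Category C] [Category D]
    [Preadditive C] [Preadditive D] [HasShift C ℤ] [HasShift D ℤ]
    [HasFiniteBiproducts C] [HasFiniteBiproducts D]
    (π : C ⥤ D) [π.Additive] [π.CommShift ℤ]
    {ι : Type*} [DecidableEq ι]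
    (fib : D → ι → C) (e : ∀ (A : D) (i : ι), π.obj (fib A i) ≅ A)
    (hfib : ∀ Y : C, ∃ (A : D) (i : ι), Nonempty (Y ≅ fib A i))
    (hcov : ∀ (X : C) (A : D), Function.Bijective
      (DFinsupp.sumAddHom (β := fun i : ι => X ⟶ fib A i)
        (fun i => ((Preadditive.rightComp (π.obj X) (e A i).hom).comp π.mapAddHom))))
    (hcov' : ∀ (X : C) (A : D), Function.Bijective
      (DFinsupp.sumAddHom (β := fun i : ι => fib A i ⟶ X)
        (fun i => ((Preadditive.leftComp (π.obj X) (e A i).inv).comp π.mapAddHom))))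
    (Tbar : D) (hTbar : IsClusterTilting Tbar)
    (T : C)
    (hT₁ : ∃ n : ℕ, Nonempty (π.obj T ≅ ⨁ (fun _ : Fin n => Tbar)))
    (hT₂ : ∀ Y : C, Nonempty (π.obj Y ≅ Tbar) → MemAdd Y T) :
    IsClusterTilting T := by
  have hTfib (i : ι) : MemAdd (fib Tbar i) T := hT₂ _ ⟨e Tbar i⟩
  refine ⟨fun f => ?_, fun X hX => ?_⟩
  · obtain ⟨n, ⟨m⟩⟩ := hT₁
    have hπT : MemAdd (π.obj T) Tbar := memAdd_of_iso_biproduct m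
    have hπT_rigid (g : π.obj T ⟶ (π.obj T)⟦(1 : ℤ)⟧) : g = 0 :=
      hπT.eq_zero_of_hom_from (fun _ => (hπT.shift 1).eq_zero_of_hom_to hTbar.1 _) g
    refine eq_zero_of_map_eq_zero π fib e hfib (fun X A => (hcov X A).1) f ?_
    exact (Preadditive.IsIso.comp_right_eq_zero _ ((π.commShiftIso (1 : ℤ)).hom.app T)).1
      (hπT_rigid _)
  · obtain ⟨A, i, ⟨w⟩⟩ := hfib X
    have shiftIso : A⟦(1 : ℤ)⟧ ≅ π.obj (X⟦(1 : ℤ)⟧) :=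
      (shiftFunctor D (1 : ℤ)).mapIso (π.mapIso w ≪≫ e A i).symm ≪≫
        ((π.commShiftIso (1 : ℤ)).app X).symm
    have hA : MemAdd A Tbar := hTbar.2 A fun f => (cancel_mono shiftIso.hom).1 <| by
      rw [zero_comp]
      exact eq_zero_of_forall_fib_eq_zero π fib e (hcov' _ _).2
        (fun j => (hTfib j).eq_zero_of_hom_from hX) _
    exact (memAdd_fib_of_memAdd π fib e hcov hTfib hA i).of_iso w

/-- Let `π : C ⥤ D` be a Galois covering of Hom-finite triangulated (here: additive
with shift) categories, with group `G` acting on `C` by autoequivalences `act g`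
commuting with `π`, the fibres `fib A` enumerating the `G`-orbit of objects over `A`,
and `π` inducing bijections `⊕_{Y ∈ π⁻¹(A)} C(X, Y) ≅ D(πX, A)` and
`⊕_{Y ∈ π⁻¹(A)} C(Y, X) ≅ D(A, πX)`. If `T̄` is a cluster-tilting object of `D`
and `T` is the orbit lift of `T̄` (so `π(T)` is a finite direct sum of copies of `T̄`,
every lift of `T̄` is a summand of `T`, and `T` is `G`-invariant), then `T` is a
cluster-tilting object of `C`. -/
theorem clusterTilting_lift {C D : Type*} [Category C] [Category D]
    [Preadditive C] [Preadditive D] [HasShift C ℤ] [HasShift D ℤ]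
    [HasFiniteBiproducts C] [HasFiniteBiproducts D]
    (π : C ⥤ D) [π.Additive] [π.CommShift ℤ]
    {G : Type*} [Group G] (act : G → C ⥤ C)
    (hact : ∀ g : G, (act g).IsEquivalence)
    (hcomm : ∀ g : G, Nonempty (act g ⋙ π ≅ π))
    {ι : Type*} [DecidableEq ι]
    (fib : D → ι → C) (e : ∀ (A : D) (i : ι), π.obj (fib A i) ≅ A)
    (hfib : ∀ Y : C, ∃ (A : D) (i : ι), Nonempty (Y ≅ fib A i))
    (horb : ∀ (A : D) (i j : ι), ∃ g : G, Nonempty ((act g).obj (fib A i) ≅ fib A j))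
    (hcov : ∀ (X : C) (A : D), Function.Bijective
      (DFinsupp.sumAddHom (β := fun i : ι => X ⟶ fib A i)
        (fun i => ((Preadditive.rightComp (π.obj X) (e A i).hom).comp π.mapAddHom))))
    (hcov' : ∀ (X : C) (A : D), Function.Bijective
      (DFinsupp.sumAddHom (β := fun i : ι => fib A i ⟶ X)
        (fun i => ((Preadditive.leftComp (π.obj X) (e A i).inv).comp π.mapAddHom))))
    (Tbar : D) (hTbar : IsClusterTilting Tbar)
    (T : C)
    (hT₁ : ∃ n : ℕ, Nonempty (π.obj T ≅ ⨁ (fun _ : Fin n => Tbar)))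
    (hT₂ : ∀ Y : C, Nonempty (π.obj Y ≅ Tbar) → MemAdd Y T)
    (hT₃ : ∀ g : G, Nonempty ((act g).obj T ≅ T)) :
    IsClusterTilting T :=
  clusterTilting_lift_general π fib e hfib hcov hcov' Tbar hTbar T hT₁ hT₂
end

section
/- Every triangulation of a regular (3n+3)-gon invariant under rotation g by angle 2π/3 contains a diagonal d spanning exactly an angle of 2π/3 (i.e., connecting vertices i and i + n + 1), and the three diagonals d, g·d, g²·d form a central triangle of the triangulation. -/
/-- `c` lies strictly inside the counterclockwise arc from `a` to `b`
on the `m`-gon with vertices `ZMod m`. -/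
def Between {m : ℕ} [NeZero m] (a c b : ZMod m) : Prop :=
  0 < (c - a).val ∧ (c - a).val < (b - a).val

/-- Two chords of the `m`-gon, recorded as ordered pairs of endpoints,
cross in their interior. -/
def Crosses {m : ℕ} [NeZero m] (p q : ZMod m × ZMod m) : Prop :=
  (Between p.1 q.1 p.2 ∧ Between p.2 q.2 p.1) ∨
  (Between p.1 q.2 p.2 ∧ Between p.2 q.1 p.1)

/-- A chord is a diagonal when its endpoints are distinct and non-adjacent. -/
def IsDiagonal {m : ℕ} (p : ZMod m × ZMod m) : Prop :=
  p.1 ≠ p.2 ∧ p.2 ≠ p.1 + 1 ∧ p.1 ≠ p.2 + 1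

/-- A triangulation of the convex `m`-gon: a maximal collection of pairwise
non-crossing diagonals (recorded symmetrically as ordered pairs). -/
structure IsTriangulation (m : ℕ) [NeZero m] (D : Set (ZMod m × ZMod m)) : Prop where
  symm : ∀ p ∈ D, (p.2, p.1) ∈ D
  diag : ∀ p ∈ D, IsDiagonal p
  noncross : ∀ p ∈ D, ∀ q ∈ D, ¬ Crosses p q
  maximal : ∀ p, IsDiagonal p → (∀ q ∈ D, ¬ Crosses p q) → p ∈ D

/-- Invariance of a set of diagonals under the rotation by `k` vertices. -/
def RotInvariant (m k : ℕ) (D : Set (ZMod m × ZMod m)) : Prop :=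
  ∀ p : ZMod m × ZMod m, p ∈ D ↔ (p.1 + (k : ZMod m), p.2 + (k : ZMod m)) ∈ D

/-!
A diagonal of length `d` (the number of steps from its first to its second endpoint) with
`n + 1 < d < 2n + 2` would cross its own image under `g`, so every diagonal has length at most
`n + 1` or at least `2n + 2`. Take a diagonal `(a, b)` of maximal length `s ≤ n + 1` and the
triangle `(a, b, c)` of the triangulation on its far side; the lengths of its three sides add up to
`3n + 3`. If `s ≤ n`, one of the other two sides is longer than `n + 1`, hence at least `2n + 2`,
and read backwards it is a diagonal of length at most `n + 1` but longer than `s`. So `s = n + 1`,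
and `(a, b)` together with its two rotations is the central triangle.
-/

section Polygon

variable {m : ℕ} [NeZero m]

lemma val_sub_add_val (u v : ZMod m) :
    (u - v).val + v.val = u.val ∨ (u - v).val + v.val = u.val + m := by
  rcases lt_or_ge ((u - v).val + v.val) m with h | h
  · left; rw [← ZMod.val_add_of_lt h, sub_add_cancel]
  · right; rw [ZMod.val_add_val_of_le h, sub_add_cancel]

lemma val_sub_add_val_sub {x y : ZMod m} (h : x ≠ y) : (y - x).val + (x - y).val = m := by
  have : NeZero (y - x) := ⟨sub_ne_zero.mpr h.symm⟩
  rw [← neg_sub y x, ZMod.val_neg_of_ne_zero]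
  have := ZMod.val_lt (y - x)
  omega

lemma val_sub_add_val_sub_eq_of_lt {a b c : ZMod m} (h : (b - a).val < (c - a).val) :
    (b - a).val + (c - b).val = (c - a).val := by
  rw [← sub_sub_sub_cancel_right c b a, ZMod.val_sub h.le]
  omega

/-- Reading positions as distances from a base point `a` turns `Between` into
a cyclic order on `ℕ`. -/
lemma between_iff_val_sub (a x y z : ZMod m) :
    Between x y z ↔
      (x - a).val < (y - a).val ∧ (y - a).val < (z - a).val ∨
      (y - a).val < (z - a).val ∧ (z - a).val < (x - a).val ∨
      (z - a).val < (x - a).val ∧ (x - a).val < (y - a).val := by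
  unfold Between
  rw [show y - x = (y - a) - (x - a) by abel, show z - x = (z - a) - (x - a) by abel]
  have := val_sub_add_val (y - a) (x - a)
  have := val_sub_add_val (z - a) (x - a)
  have := ZMod.val_lt (y - a - (x - a))
  have := ZMod.val_lt (z - a - (x - a))
  have := ZMod.val_lt (x - a)
  have := ZMod.val_lt (y - a)
  have := ZMod.val_lt (z - a)
  omega

lemma isDiagonal_iff_val_sub (x y : ZMod m) :
    IsDiagonal (x, y) ↔ 1 < (y - x).val ∧ (y - x).val + 1 < m := by
  by_cases hxy : x = y
  · simp [IsDiagonal, hxy]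
  have hm : m ≠ 1 := by rintro rfl; exact hxy (Subsingleton.elim x y)
  have hval_one (u : ZMod m) : u = 1 ↔ u.val = 1 := by
    rw [← ZMod.val_one'' hm, (ZMod.val_injective m).eq_iff]
  have hsum := val_sub_add_val_sub hxy
  have hpos : (y - x).val ≠ 0 := by rw [Ne, ZMod.val_eq_zero, sub_eq_zero]; exact Ne.symm hxy
  have hlt := ZMod.val_lt (y - x)
  change x ≠ y ∧ ¬ y = x + 1 ∧ ¬ x = y + 1 ↔ 1 < (y - x).val ∧ (y - x).val + 1 < m
  rw [← sub_eq_iff_eq_add', ← sub_eq_iff_eq_add', hval_one, hval_one]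
  simp only [ne_eq, hxy, not_false_eq_true, true_and]
  omega

lemma not_crosses_of_val_sub_le_one {p : ZMod m × ZMod m} (h : (p.2 - p.1).val ≤ 1)
    (q : ZMod m × ZMod m) : ¬ Crosses p q := by
  rintro (⟨⟨h1, h2⟩, -⟩ | ⟨⟨h1, h2⟩, -⟩) <;> omega

end Polygon

lemma RotInvariant.mem_rotate_of_mem {m k : ℕ} (hm : 3 * k = m) {D : Set (ZMod m × ZMod m)}
    (hg : RotInvariant m k D) {a : ZMod m} (ha : (a, a + k) ∈ D) :
    (a + k, a + ((2 * k : ℕ) : ZMod m)) ∈ D ∧ (a + ((2 * k : ℕ) : ZMod m), a) ∈ D := by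
  have hk : ((3 * k : ℕ) : ZMod m) = 0 := by rw [hm, ZMod.natCast_self]
  push_cast at hk
  have h2 := (hg _).mp ha
  have h3 := (hg _).mp h2
  refine ⟨by convert h2 using 2; push_cast; ring, ?_⟩
  convert h3 using 2
  · push_cast; ring
  · linear_combination -hk

section Triangulation

variable {m : ℕ} [NeZero m]

def IsEdge (D : Set (ZMod m × ZMod m)) (p : ZMod m × ZMod m) : Prop :=
  p ∈ D ∨ (p.2 - p.1).val = 1

lemma RotInvariant.val_sub_le_or_le {k : ℕ} (hk0 : 0 < k) (hk : k < m)
    {D : Set (ZMod m × ZMod m)} (hD : ∀ p ∈ D, ∀ q ∈ D, ¬ Crosses p q)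
    (hg : RotInvariant m k D) {x y : ZMod m} (hxy : (x, y) ∈ D) :
    (y - x).val ≤ k ∨ m ≤ (y - x).val + k := by
  by_contra! h
  refine hD _ hxy _ ((hg _).mp hxy) (Or.inl ⟨?_, ?_⟩)
  all_goals
    have hkval : ((k : ZMod m)).val = k := ZMod.val_cast_of_lt hk
    rw [between_iff_val_sub x]
    simp only [sub_self, ZMod.val_zero, add_sub_cancel_left, hkval,
      show y + k - x = (y - x) + k by abel,
      ZMod.val_add_of_lt (a := y - x) (b := (k : ZMod m)) (by omega)]
    omega

namespace IsTriangulation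

variable {D : Set (ZMod m × ZMod m)} (hD : IsTriangulation m D)
include hD

lemma nonempty (hm : 4 ≤ m) : D.Nonempty := by
  by_contra hempty
  rw [Set.not_nonempty_iff_eq_empty] at hempty
  have hdiag : IsDiagonal ((0 : ZMod m), ((2 : ℕ) : ZMod m)) := by
    rw [isDiagonal_iff_val_sub, sub_zero, ZMod.val_cast_of_lt (by omega)]
    omega
  simpa [hempty] using hD.maximal _ hdiag (by simp [hempty])

lemma isEdge_of_forall_not_crosses {x y : ZMod m} (h0 : 0 < (y - x).val)
    (h1 : (y - x).val + 1 < m) (hxy : ∀ q ∈ D, ¬ Crosses (x, y) q) : IsEdge D (x, y) := by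
  by_cases hside : (y - x).val = 1
  · exact Or.inr hside
  · exact Or.inl (hD.maximal _ ((isDiagonal_iff_val_sub x y).mpr ⟨by omega, h1⟩) hxy)

lemma exists_apex {a b : ZMod m} (hab : (a, b) ∈ D) :
    ∃ c : ZMod m, (b - a).val < (c - a).val ∧ IsEdge D (b, c) ∧ IsEdge D (c, a) := by
  have hs : 1 < (b - a).val ∧ (b - a).val + 1 < m :=
    (isDiagonal_iff_val_sub a b).mp (hD.diag _ hab)
  have hm : m ≠ 1 := by omega
  have hside : (a - (a - 1)).val = 1 := by rw [sub_sub_cancel, ZMod.val_one'' hm]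
  -- `c` is the first vertex after `b` whose chord to `a` meets no diagonal; a diagonal crossing
  -- `(b, c)` would then end at `a` (against minimality) or cross `(a, b)` or `(c, a)`.
  obtain ⟨c, ⟨hsc, hca⟩, hmin⟩ := Set.exists_min_image
    {c : ZMod m | (b - a).val < (c - a).val ∧ ∀ q ∈ D, ¬ Crosses (c, a) q}
    (fun c => (c - a).val) (Set.toFinite _)
    ⟨a - 1, by
      have := val_sub_add_val_sub (x := a) (y := a - 1) fun h => by
        rw [← h, sub_self, ZMod.val_zero] at hside
        omega
      omega, fun q _ => not_crosses_of_val_sub_le_one hside.le q⟩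
  have hca_ne : a ≠ c := by rintro rfl; simp at hsc
  have hcb := val_sub_add_val_sub_eq_of_lt hsc
  have hac := val_sub_add_val_sub hca_ne
  have hlt := ZMod.val_lt (c - a)
  refine ⟨c, hsc, hD.isEdge_of_forall_not_crosses (by omega) (by omega) ?_,
    hD.isEdge_of_forall_not_crosses (by omega) (by omega) hca⟩
  have not_crosses : ∀ x y, (x, y) ∈ D → Between b x c → Between c y b → False := by
    intro x y hxy hx hy
    rw [between_iff_val_sub a] at hx hy
    rcases Nat.eq_zero_or_pos (y - a).val with hya | hya
    · rw [ZMod.val_eq_zero, sub_eq_zero] at hya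
      subst hya
      have := hmin x ⟨by omega, hD.noncross _ hxy⟩
      omega
    · have := ZMod.val_lt (x - a)
      have := ZMod.val_lt (y - a)
      have hab' := hD.noncross _ hab _ hxy
      have hca' := hca _ hxy
      simp only [Crosses, between_iff_val_sub a, sub_self, ZMod.val_zero] at hab' hca'
      omega
  rintro ⟨x, y⟩ hxy (⟨hx, hy⟩ | ⟨hy, hx⟩)
  · exact not_crosses x y hxy hx hy
  · exact not_crosses y x (hD.symm _ hxy) hy hx

lemma exists_val_sub_eq_of_rotInvariant {k : ℕ} (hk : 2 ≤ k) (hm : 3 * k = m)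
    (hg : RotInvariant m k D) : ∃ a b, (a, b) ∈ D ∧ (b - a).val = k := by
  have hrot {x y : ZMod m} (hxy : (x, y) ∈ D) : (y - x).val ≤ k ∨ m ≤ (y - x).val + k :=
    hg.val_sub_le_or_le (by omega) (by omega) hD.noncross hxy
  have hflip {x y : ZMod m} (hxy : (x, y) ∈ D) : (y - x).val + (x - y).val = m :=
    val_sub_add_val_sub (hD.diag _ hxy).1
  have hshort : {p ∈ D | (p.2 - p.1).val ≤ k}.Nonempty := by
    obtain ⟨⟨x, y⟩, hxy⟩ := hD.nonempty (by omega)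
    rcases hrot hxy with h | h
    · exact ⟨(x, y), hxy, h⟩
    · exact ⟨(y, x), hD.symm _ hxy, by have := hflip hxy; dsimp only; omega⟩
  obtain ⟨⟨a, b⟩, ⟨hab, hs⟩, hmax⟩ :=
    Set.exists_max_image _ (fun p => (p.2 - p.1).val) (Set.toFinite _) hshort
  dsimp only at hs hmax
  refine ⟨a, b, hab, ?_⟩
  have hlong {x y : ZMod m} (hxy : IsEdge D (x, y)) (h : k < (y - x).val) :
      m ≤ (y - x).val + (b - a).val := by
    rcases hxy with hxy | hside
    · have := hflip hxy
      have := hrot hxy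
      have := hmax (y, x) ⟨hD.symm _ hxy, by dsimp only; omega⟩
      dsimp only at this
      omega
    · dsimp only at hside
      omega
  obtain ⟨c, hsc, hbc, hca⟩ := hD.exists_apex hab
  have := val_sub_add_val_sub_eq_of_lt hsc
  have := val_sub_add_val_sub (x := a) (y := c) (by rintro rfl; simp at hsc)
  have := ZMod.val_lt (c - a)
  by_contra hne
  rcases le_or_gt (c - b).val k with hu | hu
  · have := hlong hca (by omega)
    omega
  · have := hlong hbc hu
    omega

end IsTriangulation

end Triangulation

/-- Every triangulation of the regular `(3n+3)`-gon invariant under the rotation `g`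
by `2π/3` contains a diagonal `d` spanning exactly an angle of `2π/3` (connecting some
`i` and `i + n + 1`), and `d, g·d, g²·d` form a central triangle of the triangulation. -/
theorem central_triangle (n : ℕ) (hn : 1 ≤ n)
    (D : Set (ZMod (3 * n + 3) × ZMod (3 * n + 3)))
    (hD : IsTriangulation (3 * n + 3) D)
    (hg : RotInvariant (3 * n + 3) (n + 1) D) :
    ∃ i : ZMod (3 * n + 3),
      (i, i + ((n + 1 : ℕ) : ZMod (3 * n + 3))) ∈ D ∧
      (i + ((n + 1 : ℕ) : ZMod (3 * n + 3)), i + ((2 * (n + 1) : ℕ) : ZMod (3 * n + 3))) ∈ D ∧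
      (i + ((2 * (n + 1) : ℕ) : ZMod (3 * n + 3)), i) ∈ D := by
  obtain ⟨a, b, hab, hspan⟩ := hD.exists_val_sub_eq_of_rotInvariant (by omega) (by ring) hg
  obtain rfl : b = a + ((n + 1 : ℕ) : ZMod (3 * n + 3)) := by
    rw [← hspan, ZMod.natCast_zmod_val, add_sub_cancel]
  exact ⟨a, hab, hg.mem_rotate_of_mem (by ring) hab⟩
end

section
/- In a triangulation of a convex (3n+3)-gon invariant under the rotation g of order 3, no two diagonals can both span an angle strictly greater than 2π/3; in particular, if d is a diagonal spanning more than a third of the boundary, then d and g·d cross, contradicting noncrossing. Hence the longest diagonal in a g-invariant triangulation spans at most 2π/3. -/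
/-- No two diagonals of a `g`-invariant triangulation of the `(3n+3)`-gon can both span
an angle strictly greater than `2π/3`: if a diagonal `d = {a,b}` has both arcs containing
more than `n+1` boundary edges, then `d` and its rotate `g·d` cross; hence every diagonal
of a `g`-invariant triangulation spans at most `2π/3`. -/
theorem longest_diagonal_le (n : ℕ) (hn : 1 ≤ n) :
    (∀ a b : ZMod (3 * n + 3),
      n + 1 < (b - a).val → n + 1 < (a - b).val →
        Crosses (a, b)
          (a + ((n + 1 : ℕ) : ZMod (3 * n + 3)), b + ((n + 1 : ℕ) : ZMod (3 * n + 3)))) ∧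
    (∀ D : Set (ZMod (3 * n + 3) × ZMod (3 * n + 3)),
      IsTriangulation (3 * n + 3) D → RotInvariant (3 * n + 3) (n + 1) D →
        ∀ p ∈ D, min ((p.2 - p.1).val) ((p.1 - p.2).val) ≤ n + 1) := by
  have hk : (((n + 1 : ℕ) : ZMod (3 * n + 3))).val = n + 1 := by
    rw [ZMod.val_natCast]; exact Nat.mod_eq_of_lt (by omega)
  have h1 : ∀ a b : ZMod (3 * n + 3),
      n + 1 < (b - a).val → n + 1 < (a - b).val →
        Crosses (a, b)
          (a + ((n + 1 : ℕ) : ZMod (3 * n + 3)), b + ((n + 1 : ℕ) : ZMod (3 * n + 3))) := by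
    intro a b hab hba
    left
    simp only [Crosses, Between]
    rw [add_sub_cancel_left, add_sub_cancel_left, hk]
    exact ⟨⟨by omega, hab⟩, ⟨by omega, hba⟩⟩
  refine ⟨h1, ?_⟩
  intro D hT hR p hp
  by_contra h
  push_neg at h
  obtain ⟨ha, hb⟩ := lt_min_iff.mp h
  have hq : (p.1 + ((n + 1 : ℕ) : ZMod (3 * n + 3)),
      p.2 + ((n + 1 : ℕ) : ZMod (3 * n + 3))) ∈ D := (hR p).mp hp
  exact hT.noncross p hp _ hq (h1 p.1 p.2 ha hb)
end

section
/- Let T be a g-invariant triangulation of the regular (3n+3)-gon, where g is rotation by 2π/3, and suppose the central triangle is formed by d, g·d, g²·d with d spanning exactly 2π/3. Then the remaining diagonals of T decompose into three g-translates of a triangulation of an (n+2)-gon; in particular, the number of g-orbits of diagonals of T is 1 + (n-1) = n. -/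
/-- Rotation of a chord by `k` vertices. -/
def rotChord (m k : ℕ) (p : ZMod m × ZMod m) : ZMod m × ZMod m :=
  (p.1 + (k : ZMod m), p.2 + (k : ZMod m))

/-- Two chords lie in the same `g`-orbit (up to reversal of orientation). -/
def OrbEquiv (m k : ℕ) (p q : ZMod m × ZMod m) : Prop :=
  ∃ j : ℕ, q = (rotChord m k)^[j] p ∨ q = (rotChord m k)^[j] (p.2, p.1)


/-!
The central triangle `d, g·d, g²·d` cuts the `3k`-gon (`k = n + 1`) into three arcs of `k + 1`
vertices each, which `g` permutes cyclically. A diagonal of `T` cannot cross a side of the central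
triangle, so it lies in one of the arcs and can be rotated into the first one, from `a` to
`a + k`. The diagonals of `T` inside that arc form a triangulation of a `(k+1)`-gon, hence there
are `k - 2` of them (a triangulation of a convex `N`-gon has `N - 3` diagonals: split it along any
one of them and induct), and two distinct ones are never `g`-translates of each other. Together
with the orbit of `d` this gives `k - 1 = n` orbits.

Vertices are measured by their offset `(z - a).val ∈ [0, 3k)` from `a`, which turns crossing of
chords into inequalities between natural numbers.
-/

open Finset

/-! Convex polygons whose vertices, in cyclic order, are the elements of a finite set of naturals
in increasing order; a chord is recorded as a pair `(p.1, p.2)` with `p.1 < p.2`. -/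

def LinCrosses (p q : ℕ × ℕ) : Prop :=
  p.1 < q.1 ∧ q.1 < p.2 ∧ p.2 < q.2 ∨ q.1 < p.1 ∧ p.1 < q.2 ∧ q.2 < p.2

def IsLinDiagonal (S : Finset ℕ) (p : ℕ × ℕ) : Prop :=
  p.1 ∈ S ∧ p.2 ∈ S ∧ p.1 < p.2 ∧ (∃ c ∈ S, p.1 < c ∧ c < p.2) ∧ ∃ c ∈ S, c < p.1 ∨ p.2 < c

structure IsLinTriangulation (S : Finset ℕ) (F : Finset (ℕ × ℕ)) : Prop where
  diag : ∀ p ∈ F, IsLinDiagonal S p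
  noncross : ∀ p ∈ F, ∀ q ∈ F, ¬ LinCrosses p q
  maximal : ∀ p, IsLinDiagonal S p → (∀ q ∈ F, ¬ LinCrosses p q) → p ∈ F

lemma exists_isLinDiagonal {S : Finset ℕ} (hS : 4 ≤ S.card) : ∃ p, IsLinDiagonal S p := by
  let e := S.orderEmbOfFin rfl
  have he (i : ℕ) (hi : i < 4) : e ⟨i, by omega⟩ ∈ S := S.orderEmbOfFin_mem rfl _
  have hlt (i j : ℕ) (hij : i < j) (hj : j < 4) : e ⟨i, by omega⟩ < e ⟨j, by omega⟩ :=
    e.strictMono (Fin.mk_lt_mk.2 hij)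
  exact ⟨(e ⟨0, by omega⟩, e ⟨2, by omega⟩), he 0 (by norm_num), he 2 (by norm_num),
    hlt 0 2 (by norm_num) (by norm_num),
    ⟨_, he 1 (by norm_num), hlt 0 1 (by norm_num) (by norm_num),
      hlt 1 2 (by norm_num) (by norm_num)⟩,
    _, he 3 (by norm_num), Or.inr (hlt 2 3 (by norm_num) (by norm_num))⟩

lemma card_filter_inside_add_card_filter_outside {S : Finset ℕ} {x y : ℕ} (hx : x ∈ S)
    (hy : y ∈ S) (hxy : x < y) :
    (S.filter fun v => x ≤ v ∧ v ≤ y).card + (S.filter fun v => v ≤ x ∨ y ≤ v).card =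
      S.card + 2 := by
  have hinter : (S.filter fun v => (x ≤ v ∧ v ≤ y) ∧ (v ≤ x ∨ y ≤ v)) = {x, y} := by
    ext v
    simp only [mem_filter, mem_insert, mem_singleton]
    constructor
    · rintro ⟨-, h⟩
      omega
    · rintro (rfl | rfl)
      · exact ⟨hx, by omega⟩
      · exact ⟨hy, by omega⟩
  rw [← card_union_add_card_inter, ← filter_or, ← filter_and, hinter,
    filter_true_of_mem fun v _ => by omega, card_pair hxy.ne]

namespace IsLinTriangulation

variable {S : Finset ℕ} {F : Finset (ℕ × ℕ)} {x y : ℕ}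

lemma inside (h : IsLinTriangulation S F) (hxy : (x, y) ∈ F) :
    IsLinTriangulation (S.filter fun v => x ≤ v ∧ v ≤ y)
      ((F.erase (x, y)).filter fun q => x ≤ q.1 ∧ q.2 ≤ y) where
  diag q hq := by
    obtain ⟨⟨hne, hq⟩, hxq, hqy⟩ := by simpa only [mem_filter, mem_erase] using hq
    obtain ⟨h1, h2, hlt, ⟨c, hc, hc'⟩, -⟩ := h.diag q hq
    obtain ⟨hx, hy, -⟩ := h.diag _ hxy
    refine ⟨mem_filter.2 ⟨h1, hxq, by omega⟩, mem_filter.2 ⟨h2, by omega, hqy⟩, hlt,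
      ⟨c, mem_filter.2 ⟨hc, by omega⟩, hc'⟩, ?_⟩
    by_cases hxq' : x < q.1
    · exact ⟨x, mem_filter.2 ⟨hx, le_rfl, by omega⟩, Or.inl hxq'⟩
    · exact ⟨y, mem_filter.2 ⟨hy, by omega, le_rfl⟩,
        Or.inr (lt_of_le_of_ne hqy fun h => hne (Prod.ext (by omega) h))⟩
  noncross p hp q hq :=
    h.noncross p (mem_of_mem_erase (mem_of_mem_filter _ hp)) q
      (mem_of_mem_erase (mem_of_mem_filter _ hq))
  maximal r hr hnc := by
    obtain ⟨h1, h2, hlt, ⟨c, hc, hc'⟩, c', hc'', hout⟩ := hr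
    simp only [mem_filter] at h1 h2 hc hc''
    have hrF : r ∈ F := h.maximal r ⟨h1.1, h2.1, hlt, ⟨c, hc.1, hc'⟩, c', hc''.1, hout⟩
      fun q hq => by
        by_cases hqxy : q = (x, y)
        · subst hqxy
          simp only [LinCrosses]
          omega
        by_cases hin : x ≤ q.1 ∧ q.2 ≤ y
        · exact hnc q (mem_filter.2 ⟨mem_erase.2 ⟨hqxy, hq⟩, hin⟩)
        · have hqx := h.noncross _ hxy q hq
          have := (h.diag q hq).2.2.1
          simp only [LinCrosses] at hqx ⊢
          omega
    refine mem_filter.2 ⟨mem_erase.2 ⟨?_, hrF⟩, h1.2.1, h2.2.2⟩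
    rintro rfl
    simp only at hout
    omega

lemma outside (h : IsLinTriangulation S F) (hxy : (x, y) ∈ F) :
    IsLinTriangulation (S.filter fun v => v ≤ x ∨ y ≤ v)
      ((F.erase (x, y)).filter fun q => ¬(x ≤ q.1 ∧ q.2 ≤ y)) where
  diag q hq := by
    obtain ⟨⟨hne, hq⟩, hqout⟩ := by simpa only [mem_filter, mem_erase] using hq
    obtain ⟨h1, h2, hlt, ⟨c, hc, hc'⟩, c', hc'', hout⟩ := h.diag q hq
    obtain ⟨hx, hy, hxy', -⟩ := h.diag _ hxy
    have hqx := h.noncross _ hxy q hq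
    simp only [LinCrosses] at hqx
    have hne' : q.1 ≠ x ∨ q.2 ≠ y := by
      by_contra! h'
      exact hne (Prod.ext h'.1 h'.2)
    refine ⟨mem_filter.2 ⟨h1, by omega⟩, mem_filter.2 ⟨h2, by omega⟩, hlt, ?_, ?_⟩
    · by_cases hcs : c ≤ x ∨ y ≤ c
      · exact ⟨c, mem_filter.2 ⟨hc, hcs⟩, hc'⟩
      by_cases hxq : q.1 < x
      · exact ⟨x, mem_filter.2 ⟨hx, Or.inl le_rfl⟩, hxq, by omega⟩
      · exact ⟨y, mem_filter.2 ⟨hy, Or.inr le_rfl⟩, by omega, by omega⟩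
    · by_cases hcs : c' ≤ x ∨ y ≤ c'
      · exact ⟨c', mem_filter.2 ⟨hc'', hcs⟩, hout⟩
      by_cases hxq : x < q.1
      · exact ⟨x, mem_filter.2 ⟨hx, Or.inl le_rfl⟩, Or.inl hxq⟩
      · exact ⟨y, mem_filter.2 ⟨hy, Or.inr le_rfl⟩, Or.inr (by omega)⟩
  noncross p hp q hq :=
    h.noncross p (mem_of_mem_erase (mem_of_mem_filter _ hp)) q
      (mem_of_mem_erase (mem_of_mem_filter _ hq))
  maximal r hr hnc := by
    obtain ⟨h1, h2, hlt, ⟨c, hc, hc'⟩, c', hc'', hout⟩ := hr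
    simp only [mem_filter] at h1 h2 hc hc''
    have hrxy : r ≠ (x, y) := by
      rintro rfl
      simp only at hc' h1 h2
      omega
    have hrF : r ∈ F := h.maximal r ⟨h1.1, h2.1, hlt, ⟨c, hc.1, hc'⟩, c', hc''.1, hout⟩
      fun q hq => by
        by_cases hqxy : q = (x, y)
        · subst hqxy
          simp only [LinCrosses]
          omega
        by_cases hin : x ≤ q.1 ∧ q.2 ≤ y
        · have := (h.diag q hq).2.2.1
          have hne' : q.1 ≠ x ∨ q.2 ≠ y := by
            by_contra! h'
            exact hqxy (Prod.ext h'.1 h'.2)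
          simp only [LinCrosses]
          omega
        · exact hnc q (mem_filter.2 ⟨mem_erase.2 ⟨hqxy, hq⟩, hin⟩)
    refine mem_filter.2 ⟨mem_erase.2 ⟨hrxy, hrF⟩, fun hin => hrxy (Prod.ext ?_ ?_)⟩ <;> omega

theorem card_eq (h : IsLinTriangulation S F) (hS : 3 ≤ S.card) : F.card = S.card - 3 := by
  induction hN : S.card using Nat.strong_induction_on generalizing S F with
  | _ N ih =>
  subst hN
  rcases F.eq_empty_or_nonempty with rfl | ⟨⟨x, y⟩, hxy⟩
  · have : S.card < 4 := by
      by_contra! h4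
      obtain ⟨p, hp⟩ := exists_isLinDiagonal h4
      simpa using h.maximal p hp (by simp)
    rw [card_empty]
    omega
  obtain ⟨hx, hy, hlt, ⟨c, hc, hc'⟩, c', hc'', hout⟩ := h.diag _ hxy
  dsimp only at hx hy hlt hc' hout
  have hin3 : 3 ≤ (S.filter fun v => x ≤ v ∧ v ≤ y).card :=
    two_lt_card.2 ⟨x, mem_filter.2 ⟨hx, le_rfl, by omega⟩, c, mem_filter.2 ⟨hc, by omega⟩,
      y, mem_filter.2 ⟨hy, by omega, le_rfl⟩, by omega, by omega, by omega⟩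
  have hout3 : 3 ≤ (S.filter fun v => v ≤ x ∨ y ≤ v).card :=
    two_lt_card.2 ⟨x, mem_filter.2 ⟨hx, Or.inl le_rfl⟩, y, mem_filter.2 ⟨hy, Or.inr le_rfl⟩,
      c', mem_filter.2 ⟨hc'', by omega⟩, by omega, by omega, by omega⟩
  have hsum := card_filter_inside_add_card_filter_outside hx hy hlt
  have hF := card_filter_add_card_filter_not (s := F.erase (x, y))
    (p := fun q => x ≤ q.1 ∧ q.2 ≤ y)
  rw [card_erase_of_mem hxy, ih _ (by omega) (h.inside hxy) hin3 rfl,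
    ih _ (by omega) (h.outside hxy) hout3 rfl] at hF
  have := card_pos.2 ⟨_, hxy⟩
  omega

end IsLinTriangulation

def CycBetween (x c y : ℕ) : Prop :=
  x < c ∧ c < y ∨ y < x ∧ x < c ∨ c < y ∧ y < x

def CycCrosses (x y u v : ℕ) : Prop :=
  CycBetween x u y ∧ CycBetween y v x ∨ CycBetween x v y ∧ CycBetween y u x

lemma cycCrosses_comm {x y u v : ℕ} : CycCrosses y x u v ↔ CycCrosses x y u v := by
  unfold CycCrosses
  tauto

lemma not_cycCrosses_iff {x y u v : ℕ} (hxy : x < y) :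
    ¬ CycCrosses x y u v ↔
      x ≤ u ∧ u ≤ y ∧ x ≤ v ∧ v ≤ y ∨ (u ≤ x ∨ y ≤ u) ∧ (v ≤ x ∨ y ≤ v) := by
  unfold CycCrosses CycBetween
  omega

section Offsets

variable {m : ℕ} [NeZero m]

lemma val_add_eq_or (A B : ZMod m) :
    (A + B).val = A.val + B.val ∧ A.val + B.val < m ∨ (A + B).val + m = A.val + B.val := by
  rcases lt_or_ge (A.val + B.val) m with h | h
  · exact Or.inl ⟨ZMod.val_add_of_lt h, h⟩
  · exact Or.inr (ZMod.val_add_val_of_le h).symm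

lemma between_iff_cycBetween (a x c y : ZMod m) :
    Between x c y ↔ CycBetween (x - a).val (c - a).val (y - a).val := by
  have hc := val_add_eq_or (c - x) (x - a)
  have hy := val_add_eq_or (y - x) (x - a)
  rw [sub_add_sub_cancel] at hc hy
  have := (c - a).val_lt
  have := (y - a).val_lt
  have := (x - a).val_lt
  have := (c - x).val_lt
  have := (y - x).val_lt
  unfold Between CycBetween
  omega

lemma crosses_iff_cycCrosses (a : ZMod m) (p q : ZMod m × ZMod m) :
    Crosses p q ↔ CycCrosses (p.1 - a).val (p.2 - a).val (q.1 - a).val (q.2 - a).val := by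
  simp only [Crosses, CycCrosses, between_iff_cycBetween a]

lemma add_val_sub (a z : ZMod m) : a + ((z - a).val : ZMod m) = z := by
  rw [ZMod.natCast_zmod_val (z - a), add_sub_cancel]

lemma val_add_natCast_sub (a z : ZMod m) {c : ℕ} (hc : c < m) :
    (z + c - a).val = (z - a).val + c ∧ (z - a).val + c < m ∨
      (z + c - a).val + m = (z - a).val + c := by
  have := val_add_eq_or (z - a) (c : ZMod m)
  rwa [ZMod.val_natCast_of_lt hc, ← add_sub_right_comm] at this

end Offsets

section Orbits

variable {m k : ℕ}

lemma rotChord_iterate (j : ℕ) (p : ZMod m × ZMod m) :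
    (rotChord m k)^[j] p = (p.1 + ((j * k : ℕ) : ZMod m), p.2 + ((j * k : ℕ) : ZMod m)) := by
  induction j generalizing p with
  | zero => simp
  | succ j ih =>
    rw [Function.iterate_succ_apply, ih]
    simp only [rotChord, Prod.mk.injEq]
    push_cast
    constructor <;> ring

lemma commute_rotChord_swap : Function.Commute (rotChord m k) Prod.swap := fun _ => rfl

lemma iterate_rotChord_mem {D : Set (ZMod m × ZMod m)} (hg : RotInvariant m k D)
    {p : ZMod m × ZMod m} (hp : p ∈ D) (j : ℕ) : (rotChord m k)^[j] p ∈ D := by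
  induction j with
  | zero => exact hp
  | succ j ih =>
    rw [Function.iterate_succ_apply']
    exact (hg _).1 ih

lemma orbEquiv_iff {p q : ZMod m × ZMod m} :
    OrbEquiv m k p q ↔ ∃ j : ℕ,
      q = (p.1 + ((j * k : ℕ) : ZMod m), p.2 + ((j * k : ℕ) : ZMod m)) ∨
      q = (p.2 + ((j * k : ℕ) : ZMod m), p.1 + ((j * k : ℕ) : ZMod m)) := by
  simp only [OrbEquiv, rotChord_iterate]

lemma OrbEquiv.refl (p : ZMod m × ZMod m) : OrbEquiv m k p p := ⟨0, Or.inl rfl⟩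

lemma OrbEquiv.trans {p q r : ZMod m × ZMod m} (hpq : OrbEquiv m k p q)
    (hqr : OrbEquiv m k q r) : OrbEquiv m k p r := by
  rw [orbEquiv_iff] at hpq hqr ⊢
  obtain ⟨i, rfl | rfl⟩ := hpq <;> obtain ⟨j, rfl | rfl⟩ := hqr <;> refine ⟨i + j, ?_⟩ <;>
    simp only [Prod.mk.injEq] <;> push_cast <;> [left; right; right; left] <;>
    constructor <;> ring

lemma OrbEquiv.symm [NeZero m] {p q : ZMod m × ZMod m} (h : OrbEquiv m k p q) :
    OrbEquiv m k q p := by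
  rw [orbEquiv_iff] at h ⊢
  -- rotating `m - 1` more times per step closes the orbit, since `m • k = 0` in `ZMod m`
  obtain ⟨j, rfl | rfl⟩ := h
  · refine ⟨(m - 1) * j, Or.inl (Prod.ext ?_ ?_)⟩ <;>
      push_cast [Nat.cast_sub (NeZero.pos m), ZMod.natCast_self] <;> ring
  · refine ⟨(m - 1) * j, Or.inr (Prod.ext ?_ ?_)⟩ <;>
      push_cast [Nat.cast_sub (NeZero.pos m), ZMod.natCast_self] <;> ring

lemma setOf_orbEquiv_eq_iff [NeZero m] {p q : ZMod m × ZMod m} :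
    {r | OrbEquiv m k p r} = {r | OrbEquiv m k q r} ↔ OrbEquiv m k p q := by
  refine ⟨fun h => ?_, fun h => Set.ext fun r => ⟨h.symm.trans, h.trans⟩⟩
  have : q ∈ {r | OrbEquiv m k q r} := OrbEquiv.refl q
  rwa [← h] at this

lemma rotChord_iterate_three (hm : m = 3 * k) (p : ZMod m × ZMod m) :
    (rotChord m k)^[3] p = p := by
  have h3k : ((3 * k : ℕ) : ZMod m) = 0 := by rw [← hm, ZMod.natCast_self]
  rw [rotChord_iterate, h3k, add_zero, add_zero]

end Orbits

section ArcChords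

variable {m : ℕ}

def arcChord (a : ZMod m) (uv : ℕ × ℕ) : ZMod m × ZMod m :=
  (a + (uv.1 : ZMod m), a + (uv.2 : ZMod m))

lemma val_add_natCast_sub_self (a : ZMod m) {c : ℕ} (hc : c < m) : (a + c - a).val = c := by
  rw [add_sub_cancel_left, ZMod.val_natCast_of_lt hc]

lemma arcChord_inj (a : ZMod m) {uv uv' : ℕ × ℕ} (h1 : uv.1 < m) (h2 : uv.2 < m)
    (h1' : uv'.1 < m) (h2' : uv'.2 < m) : arcChord a uv = arcChord a uv' ↔ uv = uv' := by
  simp only [arcChord, add_right_inj, ZMod.natCast_eq_natCast_iff',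
    Nat.mod_eq_of_lt h1, Nat.mod_eq_of_lt h2, Nat.mod_eq_of_lt h1', Nat.mod_eq_of_lt h2',
    Prod.ext_iff]

lemma isDiagonal_arcChord (a : ZMod m) {uv : ℕ × ℕ} (h : uv.1 + 1 < uv.2) (h' : uv.2 + 1 < m) :
    IsDiagonal (arcChord a uv) := by
  simp only [IsDiagonal, arcChord, add_assoc, ← Nat.cast_succ, ne_eq, add_right_inj,
    ZMod.natCast_eq_natCast_iff', Nat.mod_eq_of_lt (by omega : uv.1 < m),
    Nat.mod_eq_of_lt (by omega : uv.2 < m), Nat.mod_eq_of_lt (by omega : uv.1 + 1 < m),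
    Nat.mod_eq_of_lt h']
  omega

lemma two_le_of_isDiagonal {a : ZMod m} {k : ℕ} (h : IsDiagonal (a, a + (k : ZMod m))) :
    2 ≤ k := by
  by_contra! hk
  interval_cases k <;> simp [IsDiagonal] at h

lemma arcChord_val_sub [NeZero m] (a : ZMod m) (p : ZMod m × ZMod m) :
    arcChord a ((p.1 - a).val, (p.2 - a).val) = p :=
  Prod.ext (add_val_sub a p.1) (add_val_sub a p.2)

/-- The diagonals of the `(k+1)`-gon with vertices `a, a + 1, …, a + k` that belong to `D`,
recorded by their offsets from `a`; the side `(0, k)` of this polygon is excluded. -/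
noncomputable def arcDiagonals (k : ℕ) (D : Set (ZMod m × ZMod m)) (a : ZMod m) :
    Finset (ℕ × ℕ) :=
  open Classical in
  ((range (k + 1)) ×ˢ (range (k + 1))).filter fun uv =>
    uv.1 < uv.2 ∧ uv ≠ (0, k) ∧ arcChord a uv ∈ D

lemma mem_arcDiagonals {k : ℕ} {D : Set (ZMod m × ZMod m)} {a : ZMod m} {uv : ℕ × ℕ} :
    uv ∈ arcDiagonals k D a ↔ uv.1 < uv.2 ∧ uv.2 ≤ k ∧ uv ≠ (0, k) ∧ arcChord a uv ∈ D := by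
  simp only [arcDiagonals, mem_filter, mem_product, mem_range]
  exact ⟨fun ⟨⟨_, h⟩, h'⟩ => ⟨h'.1, by omega, h'.2⟩,
    fun ⟨h, h', h''⟩ => ⟨⟨by omega, by omega⟩, h, h''⟩⟩

end ArcChords

section CentralTriangle

variable {m k : ℕ} [NeZero m] {D : Set (ZMod m × ZMod m)} {a : ZMod m}

lemma val_sub_iterate_rotChord (hm : m = 3 * k) {j : ℕ} (hj : j < 3) (p : ZMod m × ZMod m) :
    ((((rotChord m k)^[j] p).1 - a).val = (p.1 - a).val + j * k ∧ (p.1 - a).val + j * k < m ∨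
      (((rotChord m k)^[j] p).1 - a).val + m = (p.1 - a).val + j * k) ∧
    ((((rotChord m k)^[j] p).2 - a).val = (p.2 - a).val + j * k ∧ (p.2 - a).val + j * k < m ∨
      (((rotChord m k)^[j] p).2 - a).val + m = (p.2 - a).val + j * k) := by
  have hjk : j * k < m := by
    have := NeZero.ne m
    interval_cases j <;> omega
  rw [rotChord_iterate]
  exact ⟨val_add_natCast_sub a p.1 hjk, val_add_natCast_sub a p.2 hjk⟩

lemma val_sub_mem_arc (hm : m = 3 * k) (hD : IsTriangulation m D) (hg : RotInvariant m k D)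
    (hd : (a, a + (k : ZMod m)) ∈ D) {p : ZMod m × ZMod m} (hp : p ∈ D) :
    (p.1 - a).val ≤ k ∧ (p.2 - a).val ≤ k ∨
    k ≤ (p.1 - a).val ∧ (p.1 - a).val ≤ 2 * k ∧ k ≤ (p.2 - a).val ∧ (p.2 - a).val ≤ 2 * k ∨
    (2 * k ≤ (p.1 - a).val ∨ (p.1 - a).val = 0) ∧
      (2 * k ≤ (p.2 - a).val ∨ (p.2 - a).val = 0) := by
  have hm0 := NeZero.ne m
  have hk : (a + (k : ZMod m) - a).val = k := val_add_natCast_sub_self a (by omega)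
  have h0 := hD.noncross _ hd p hp
  have h1 := hD.noncross _ (iterate_rotChord_mem hg hd 1) p hp
  have h2 := hD.noncross _ (iterate_rotChord_mem hg hd 2) p hp
  have e1 := val_sub_iterate_rotChord (a := a) hm (j := 1) (by norm_num) (a, a + (k : ZMod m))
  have e2 := val_sub_iterate_rotChord (a := a) hm (j := 2) (by norm_num) (a, a + (k : ZMod m))
  simp only [sub_self, ZMod.val_zero, hk] at e1 e2
  rw [crosses_iff_cycCrosses a, sub_self, ZMod.val_zero, hk] at h0
  rw [crosses_iff_cycCrosses a] at h1 h2
  -- the sides of the central triangle have offsets `(0, k)`, `(k, 2k)` and `(2k, 0)`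
  have s0 := (not_cycCrosses_iff (by omega)).1 h0
  have s1 := (not_cycCrosses_iff (by omega)).1 h1
  have s2 := (not_cycCrosses_iff (by omega)).1 (mt cycCrosses_comm.2 h2)
  omega

lemma exists_orbEquiv_first_arc (hm : m = 3 * k) (hD : IsTriangulation m D)
    (hg : RotInvariant m k D) (hd : (a, a + (k : ZMod m)) ∈ D) {p : ZMod m × ZMod m}
    (hp : p ∈ D) :
    ∃ r ∈ D, OrbEquiv m k p r ∧ (r.1 - a).val < (r.2 - a).val ∧ (r.2 - a).val ≤ k := by
  obtain ⟨j, h1, h2⟩ : ∃ j, (((rotChord m k)^[j] p).1 - a).val ≤ k ∧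
      (((rotChord m k)^[j] p).2 - a).val ≤ k := by
    have := (p.1 - a).val_lt
    have := (p.2 - a).val_lt
    rcases val_sub_mem_arc hm hD hg hd hp with h | h | h
    · exact ⟨0, h⟩
    · have := val_sub_iterate_rotChord (a := a) hm (j := 2) (by norm_num) p
      exact ⟨2, by omega⟩
    · have := val_sub_iterate_rotChord (a := a) hm (j := 1) (by norm_num) p
      exact ⟨1, by omega⟩
  set q := (rotChord m k)^[j] p
  have hq : q ∈ D := iterate_rotChord_mem hg hp j
  have hne : (q.1 - a).val ≠ (q.2 - a).val := fun h =>
    (hD.diag q hq).1 (by rw [← add_val_sub a q.1, h, add_val_sub])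
  rcases hne.lt_or_gt with hlt | hlt
  · exact ⟨q, hq, ⟨j, Or.inl rfl⟩, hlt, h2⟩
  · exact ⟨(q.2, q.1), hD.symm q hq,
      ⟨j, Or.inr ((commute_rotChord_swap.iterate_left j).eq p).symm⟩, hlt, h1⟩

lemma eq_of_orbEquiv_of_first_arc (hm : m = 3 * k) {p q : ZMod m × ZMod m}
    (hp : (p.1 - a).val < (p.2 - a).val ∧ (p.2 - a).val ≤ k)
    (hq : (q.1 - a).val < (q.2 - a).val ∧ (q.2 - a).val ≤ k) (h : OrbEquiv m k p q) :
    p = q := by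
  obtain ⟨j, h⟩ := h
  rw [← Function.IsPeriodicPt.iterate_mod_apply (rotChord_iterate_three hm p),
    ← Function.IsPeriodicPt.iterate_mod_apply (rotChord_iterate_three hm (p.2, p.1))] at h
  have hj : j % 3 < 3 := Nat.mod_lt _ (by norm_num)
  have hk : 0 < k := by have := NeZero.ne m; omega
  generalize j % 3 = i at h hj
  rcases h with rfl | rfl
  · have := val_sub_iterate_rotChord (a := a) hm hj p
    interval_cases i <;> first | rfl | omega
  · have := val_sub_iterate_rotChord (a := a) hm hj (p.2, p.1)
    dsimp only at this
    interval_cases i <;> omega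

lemma eq_of_orbEquiv_arcChord (hm : m = 3 * k) {uv uv' : ℕ × ℕ}
    (huv : uv.1 < uv.2 ∧ uv.2 ≤ k) (huv' : uv'.1 < uv'.2 ∧ uv'.2 ≤ k)
    (h : OrbEquiv m k (arcChord a uv) (arcChord a uv')) : uv = uv' := by
  have hk : k < m := by have := NeZero.ne m; omega
  have hval {u : ℕ} (hu : u ≤ k) : (a + (u : ZMod m) - a).val = u :=
    val_add_natCast_sub_self a (by omega)
  refine (arcChord_inj a (by omega) (by omega) (by omega) (by omega)).1
    (eq_of_orbEquiv_of_first_arc (a := a) hm ?_ ?_ h) <;>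
  simp only [arcChord, hval huv.2, hval huv'.2, hval (huv.1.le.trans huv.2),
    hval (huv'.1.le.trans huv'.2)]
  exacts [huv, huv']

lemma isLinTriangulation_arcDiagonals (hm : m = 3 * k) (hD : IsTriangulation m D)
    (hg : RotInvariant m k D) (hd : (a, a + (k : ZMod m)) ∈ D) :
    IsLinTriangulation (range (k + 1)) (arcDiagonals k D a) where
  diag uv huv := by
    obtain ⟨hlt, hle, hne, hmem⟩ := mem_arcDiagonals.1 huv
    have hsucc : uv.2 ≠ uv.1 + 1 := fun h =>
      (hD.diag _ hmem).2.1 (by rw [arcChord, h, Nat.cast_succ, add_assoc])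
    refine ⟨mem_range.2 (by omega), mem_range.2 (by omega), hlt,
      ⟨uv.1 + 1, mem_range.2 (by omega), by omega, by omega⟩, ?_⟩
    by_cases h0 : uv.1 = 0
    · exact ⟨k, mem_range.2 (by omega),
        Or.inr (lt_of_le_of_ne hle fun h => hne (Prod.ext h0 h))⟩
    · exact ⟨0, mem_range.2 (by omega), Or.inl (by omega)⟩
  noncross uv huv uv' huv' := by
    obtain ⟨hlt, hle, -, hmem⟩ := mem_arcDiagonals.1 huv
    obtain ⟨hlt', hle', -, hmem'⟩ := mem_arcDiagonals.1 huv'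
    have hm0 := NeZero.ne m
    have := hD.noncross _ hmem _ hmem'
    rw [crosses_iff_cycCrosses a] at this
    simp only [arcChord, val_add_natCast_sub_self a (by omega : uv.1 < m),
      val_add_natCast_sub_self a (by omega : uv.2 < m),
      val_add_natCast_sub_self a (by omega : uv'.1 < m),
      val_add_natCast_sub_self a (by omega : uv'.2 < m), not_cycCrosses_iff hlt] at this
    unfold LinCrosses
    omega
  maximal xy hxy hnc := by
    obtain ⟨hx, hy, hlt, ⟨c, -, hc⟩, c', hc', hout⟩ := hxy
    rw [mem_range] at hx hy hc'
    have hm0 := NeZero.ne m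
    refine mem_arcDiagonals.2 ⟨hlt, by omega, fun h => by simp only [h] at hout; omega, ?_⟩
    refine hD.maximal _ (isDiagonal_arcChord a (by omega) (by omega)) fun q hq => ?_
    rw [crosses_iff_cycCrosses a]
    simp only [arcChord, val_add_natCast_sub_self a (by omega : xy.1 < m),
      val_add_natCast_sub_self a (by omega : xy.2 < m), not_cycCrosses_iff hlt]
    have hq' := arcChord_val_sub a q
    rcases val_sub_mem_arc hm hD hg hd hq with h | h | h
    · rcases lt_trichotomy (q.1 - a).val (q.2 - a).val with huv | huv | huv
      · by_cases hc : ((q.1 - a).val, (q.2 - a).val) = (0, k)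
        · simp only [Prod.mk.injEq] at hc
          omega
        · have := hnc _ (mem_arcDiagonals.2 ⟨huv, h.2, hc, by rw [hq']; exact hq⟩)
          unfold LinCrosses at this
          omega
      · omega
      · by_cases hc : ((q.2 - a).val, (q.1 - a).val) = (0, k)
        · simp only [Prod.mk.injEq] at hc
          omega
        · have := hnc _ (mem_arcDiagonals.2 ⟨huv, h.1, hc,
            by rw [arcChord_val_sub a (q.2, q.1)]; exact hD.symm q hq⟩)
          unfold LinCrosses at this
          omega
    all_goals omega

lemma image_setOf_orbEquiv (hm : m = 3 * k) (hD : IsTriangulation m D)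
    (hg : RotInvariant m k D) (hd : (a, a + (k : ZMod m)) ∈ D) :
    (fun p => {q | OrbEquiv m k p q}) '' D =
      insert {q | OrbEquiv m k (a, a + (k : ZMod m)) q}
        ((fun uv => {q | OrbEquiv m k (arcChord a uv) q}) ''
          (arcDiagonals k D a : Set (ℕ × ℕ))) := by
  ext t
  simp only [Set.mem_image, Set.mem_insert_iff, mem_coe]
  constructor
  · rintro ⟨p, hp, rfl⟩
    obtain ⟨r, hr, hpr, hlt, hle⟩ := exists_orbEquiv_first_arc hm hD hg hd hp
    rw [setOf_orbEquiv_eq_iff.2 hpr]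
    by_cases h0 : ((r.1 - a).val, (r.2 - a).val) = (0, k)
    · left
      rw [← arcChord_val_sub a r, h0]
      simp [arcChord]
    · exact Or.inr ⟨_, mem_arcDiagonals.2 ⟨hlt, hle, h0, (arcChord_val_sub a r).symm ▸ hr⟩,
        by rw [arcChord_val_sub]⟩
  · rintro (rfl | ⟨uv, huv, rfl⟩)
    · exact ⟨_, hd, rfl⟩
    · exact ⟨_, (mem_arcDiagonals.1 huv).2.2.2, rfl⟩

theorem ncard_orbits (hm : m = 3 * k) (hD : IsTriangulation m D) (hg : RotInvariant m k D)
    (hd : (a, a + (k : ZMod m)) ∈ D) :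
    ((fun p => {q | OrbEquiv m k p q}) '' D).ncard = k - 1 := by
  have hk := two_le_of_isDiagonal (hD.diag _ hd)
  have hinj : Set.InjOn (fun uv => {q | OrbEquiv m k (arcChord a uv) q})
      (arcDiagonals k D a) := fun uv huv uv' huv' h => by
    obtain ⟨hlt, hle, -⟩ := mem_arcDiagonals.1 huv
    obtain ⟨hlt', hle', -⟩ := mem_arcDiagonals.1 huv'
    exact eq_of_orbEquiv_arcChord hm ⟨hlt, hle⟩ ⟨hlt', hle'⟩ (setOf_orbEquiv_eq_iff.1 h)
  have hcentral : {q | OrbEquiv m k (a, a + (k : ZMod m)) q} ∉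
      (fun uv => {q | OrbEquiv m k (arcChord a uv) q}) '' (arcDiagonals k D a : Set (ℕ × ℕ)) := by
    rintro ⟨uv, huv, h⟩
    obtain ⟨hlt, hle, hne, -⟩ := mem_arcDiagonals.1 huv
    have hd' : (a, a + (k : ZMod m)) = arcChord a (0, k) := by simp [arcChord]
    rw [hd'] at h
    exact hne (eq_of_orbEquiv_arcChord hm ⟨hlt, hle⟩ ⟨by omega, le_rfl⟩ (setOf_orbEquiv_eq_iff.1 h))
  rw [image_setOf_orbEquiv hm hD hg hd, Set.ncard_insert_of_notMem hcentral, hinj.ncard_image,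
    Set.ncard_coe_finset,
    (isLinTriangulation_arcDiagonals hm hD hg hd).card_eq (by rw [card_range]; omega), card_range]
  omega

end CentralTriangle

theorem orbit_count_general (n : ℕ)
    (D : Set (ZMod (3 * n + 3) × ZMod (3 * n + 3)))
    (hD : IsTriangulation (3 * n + 3) D)
    (hg : RotInvariant (3 * n + 3) (n + 1) D)
    (a : ZMod (3 * n + 3))
    (hd : (a, a + ((n + 1 : ℕ) : ZMod (3 * n + 3))) ∈ D) :
    (∃ E ⊆ D,
      (∀ p ∈ E, (p.1 - a).val ≤ n + 1 ∧ (p.2 - a).val ≤ n + 1 ∧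
        ¬ OrbEquiv (3 * n + 3) (n + 1) (a, a + ((n + 1 : ℕ) : ZMod (3 * n + 3))) p) ∧
      (∀ p ∈ D,
        OrbEquiv (3 * n + 3) (n + 1) (a, a + ((n + 1 : ℕ) : ZMod (3 * n + 3))) p ∨
        ∃ q ∈ E, OrbEquiv (3 * n + 3) (n + 1) q p)) ∧
    Set.ncard ((fun p => {q | OrbEquiv (3 * n + 3) (n + 1) p q}) '' D) = n := by
  have hm : 3 * n + 3 = 3 * (n + 1) := by ring
  refine ⟨⟨{p ∈ D | (p.1 - a).val ≤ n + 1 ∧ (p.2 - a).val ≤ n + 1 ∧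
      ¬ OrbEquiv (3 * n + 3) (n + 1) (a, a + ((n + 1 : ℕ) : ZMod (3 * n + 3))) p},
    fun p hp => hp.1, fun p hp => hp.2, fun p hp => ?_⟩,
    (ncard_orbits hm hD hg hd).trans (Nat.add_sub_cancel n 1)⟩
  by_cases hcentral : OrbEquiv (3 * n + 3) (n + 1) (a, a + ((n + 1 : ℕ) : ZMod (3 * n + 3))) p
  · exact Or.inl hcentral
  obtain ⟨r, hr, hpr, hlt, hle⟩ := exists_orbEquiv_first_arc hm hD hg hd hp
  exact Or.inr ⟨r, ⟨hr, by omega, hle, fun h => hcentral (h.trans hpr.symm)⟩, hpr.symm⟩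

/-- If a `g`-invariant triangulation of the `(3n+3)`-gon has central triangle
`d, g·d, g²·d` with `d = {a, a+n+1}` spanning exactly `2π/3`, then the remaining
diagonals decompose into three `g`-translates of a triangulation of an `(n+2)`-gon
(a set `E` of diagonals supported on the arc from `a` to `a+n+1`), and the number of
`g`-orbits of diagonals is `n`. -/
theorem orbit_count (n : ℕ) (hn : 1 ≤ n)
    (D : Set (ZMod (3 * n + 3) × ZMod (3 * n + 3)))
    (hD : IsTriangulation (3 * n + 3) D)
    (hg : RotInvariant (3 * n + 3) (n + 1) D)
    (a : ZMod (3 * n + 3))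
    (hd : (a, a + ((n + 1 : ℕ) : ZMod (3 * n + 3))) ∈ D) :
    (∃ E ⊆ D,
      (∀ p ∈ E, (p.1 - a).val ≤ n + 1 ∧ (p.2 - a).val ≤ n + 1 ∧
        ¬ OrbEquiv (3 * n + 3) (n + 1) (a, a + ((n + 1 : ℕ) : ZMod (3 * n + 3))) p) ∧
      (∀ p ∈ D,
        OrbEquiv (3 * n + 3) (n + 1) (a, a + ((n + 1 : ℕ) : ZMod (3 * n + 3))) p ∨
        ∃ q ∈ E, OrbEquiv (3 * n + 3) (n + 1) q p)) ∧
    Set.ncard ((fun p => {q | OrbEquiv (3 * n + 3) (n + 1) p q}) '' D) = n :=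
  orbit_count_general n D hD hg a hd
end

section
/- In a triangulation of a punctured nℓ-gon invariant under the automorphism g (rotation by 2π/ℓ composed with tagging change), in which at least one diagonal connects the puncture to the boundary, the set of boundary vertices connected to the puncture is invariant under rotation by 2π/ℓ; consequently at least ℓ boundary vertices are connected to the puncture. -/
/-- In a tagged triangulation of a punctured `nℓ`-gon invariant under the automorphism
`g` (rotation of the boundary by `n` vertices composed with the change of tags at the
puncture), the set of boundary vertices connected to the puncture is invariant under
rotation by `n`; consequently at least `ℓ` boundary vertices are connected to the
puncture. Here `P` records the arcs of the triangulation incident to the puncture as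
pairs (boundary vertex, tag), `hg` is the `g`-invariance of the triangulation restricted
to these arcs, and `hne` says at least one arc connects the puncture to the boundary. -/
theorem puncture_vertices (n ℓ : ℕ) (hn : 0 < n) (hℓ : 0 < ℓ)
    (P : Set (ZMod (n * ℓ) × Bool))
    (hg : ∀ v : ZMod (n * ℓ), ∀ t : Bool, (v, t) ∈ P ↔ (v + (n : ZMod (n * ℓ)), !t) ∈ P)
    (hne : P.Nonempty) :
    (∀ v : ZMod (n * ℓ), (∃ t, (v, t) ∈ P) → ∃ t, (v + (n : ZMod (n * ℓ)), t) ∈ P) ∧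
    ℓ ≤ Set.ncard {v : ZMod (n * ℓ) | ∃ t, (v, t) ∈ P} := by
  have hnl : 0 < n * ℓ := Nat.mul_pos hn hℓ
  haveI : NeZero (n * ℓ) := ⟨hnl.ne'⟩
  set S : Set (ZMod (n * ℓ)) := {v : ZMod (n * ℓ) | ∃ t, (v, t) ∈ P} with hS
  have hclosed : ∀ v : ZMod (n * ℓ), (∃ t, (v, t) ∈ P) →
      ∃ t, (v + (n : ZMod (n * ℓ)), t) ∈ P := by
    rintro v ⟨t, ht⟩
    exact ⟨!t, (hg v t).mp ht⟩
  refine ⟨hclosed, ?_⟩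
  obtain ⟨⟨v₀, t₀⟩, hv₀⟩ := hne
  -- every v₀ + k*n is in S
  have hmem : ∀ k : ℕ, v₀ + (k * n : ℕ) ∈ S := by
    intro k
    induction k with
    | zero => simpa using ⟨t₀, hv₀⟩
    | succ k ih =>
        have := hclosed _ ih
        have heq : v₀ + ((k + 1) * n : ℕ) = v₀ + (k * n : ℕ) + (n : ZMod (n * ℓ)) := by
          push_cast
          ring
        rw [heq]
        exact this
  set f : Fin ℓ → ZMod (n * ℓ) := fun k => v₀ + ((k : ℕ) * n : ℕ) with hf
  have hinj : Function.Injective f := by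
    intro k k' h
    have h' : (((k : ℕ) * n : ℕ) : ZMod (n * ℓ)) = (((k' : ℕ) * n : ℕ) : ZMod (n * ℓ)) := by
      have := add_left_cancel h
      exact this
    have hk : (k : ℕ) * n < n * ℓ := by
      rw [mul_comm n ℓ]
      exact (Nat.mul_lt_mul_right hn).mpr k.isLt
    have hk' : (k' : ℕ) * n < n * ℓ := by
      rw [mul_comm n ℓ]
      exact (Nat.mul_lt_mul_right hn).mpr k'.isLt
    have hval : (k : ℕ) * n = (k' : ℕ) * n := by
      have := congrArg ZMod.val h'
      rwa [ZMod.val_cast_of_lt hk, ZMod.val_cast_of_lt hk'] at this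
    exact Fin.ext (Nat.eq_of_mul_eq_mul_right hn hval)
  have hrange : Set.range f ⊆ S := by
    rintro _ ⟨k, rfl⟩
    exact hmem k
  have hfin : S.Finite := Set.toFinite S
  calc ℓ = (Set.range f).ncard := by
        rw [← Set.image_univ, Set.ncard_image_of_injective _ hinj, Set.ncard_univ,
          Nat.card_eq_fintype_card, Fintype.card_fin]
    _ ≤ S.ncard := Set.ncard_le_ncard hrange hfin
end

section
/- With notation as in the generalized mutation setup (A the l×l cyclic permutation matrix, C = Σ C_i, B = Σ B_i, C_i^t = A^{i+1} B_i for 0 ≤ i ≤ l-3, S = [[-A^{-1},0],[Σ_i C_i Σ_{j=0}^i A^j, I]]), the bottom-left block of S M S^t equals Σ_{i=0}^{l-3} C_i − Σ_{i=0}^{l-3} B_i^t + (A^{l-1} B_{l-2})^t − C_{l-2} A^{l-1}. -/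
/-!
As `A⁻¹ = Aᵀ`, `S = [[-Aᵀ, 0], [Q, 1]]` with `Q = ∑ᵢ Cᵢ ∑_{j ≤ i} Aʲ`, and the bottom-left block of `S M Sᵀ` is
`-(Q (A - Aᵀ) + C - Bᵀ) A`, a sum of one contribution per pair `(Cᵢ, Bᵢ)`. As
`(∑_{j ≤ i} Aʲ)(A² - 1) = (A^{i+1} - 1)(A + 1)`, the `i`-th contribution is
`Cᵢ - Cᵢ A^{i+1} - Cᵢ A^{i+2} + Bᵢᵀ A`. For `i ≤ l - 3` the relation `Cᵢᵀ = A^{i+1} Bᵢ` and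
orthogonality of `A` reduce it to `Cᵢ - Bᵢᵀ`; for `i = l - 2` the identity `Aˡ = 1` reduces it to
`(A^{l-1} B_{l-2})ᵀ - C_{l-2} A^{l-1}`.
-/

open Matrix

/-- The `l × l` cyclic permutation matrix with `A i (i+1) = 1` (indices mod `l`). -/
def cyc (l : ℕ) [NeZero l] : Matrix (Fin l) (Fin l) ℤ :=
  Matrix.of fun i j => if j = i + 1 then 1 else 0

open Finset

theorem fromBlocks_mul_mul_transpose_toBlocks₂₁ {R l m : Type*} [Semiring R]
    [Fintype l] [Fintype m] [DecidableEq m] (P : Matrix l l R) (Q : Matrix m l R)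
    (X : Matrix l l R) (Y : Matrix l m R) (Z : Matrix m l R) (W : Matrix m m R) :
    (fromBlocks P 0 Q 1 * fromBlocks X Y Z W * (fromBlocks P 0 Q 1)ᵀ).toBlocks₂₁ =
      (Q * X + Z) * Pᵀ := by
  simp [fromBlocks_transpose, fromBlocks_multiply]

theorem geom_sum_mul_sq_sub_one {α : Type*} [Ring α] (a : α) (k : ℕ) :
    (∑ j ∈ range (k + 1), a ^ j) * (a ^ 2 - 1) = a ^ (k + 2) + a ^ (k + 1) - a - 1 := by
  rw [show a ^ 2 - 1 = (a - 1) * (a + 1) by noncomm_ring, ← mul_assoc, geom_sum_mul]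
  noncomm_ring

theorem cyc_eq_permMatrix (l : ℕ) [NeZero l] :
    cyc l = (Equiv.addRight (1 : Fin l)).permMatrix ℤ := by
  ext i j
  simp [cyc, eq_comm]

theorem transpose_cyc_mul_cyc (l : ℕ) [NeZero l] : (cyc l)ᵀ * cyc l = 1 := by
  rw [cyc_eq_permMatrix, transpose_permMatrix, ← permMatrix_mul, mul_inv_cancel, permMatrix_one]

theorem cyc_pow_self (l : ℕ) [NeZero l] : cyc l ^ l = 1 := by
  have hl : l • (1 : Fin l) = 0 := by simpa using card_nsmul_eq_zero (G := Fin l) (x := 1)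
  rw [cyc_eq_permMatrix, ← inv_inv (Equiv.addRight _), ← permMatrixHom_apply, ← map_pow, inv_pow,
    Equiv.nsmul_addRight, hl, Equiv.addRight_zero, inv_one, map_one]

section MutationTerm

variable {n m R : Type*} [Fintype n] [DecidableEq n] [CommRing R]

/-- The contribution of the pair `(Cₖ, Bₖ)` to the bottom-left block of `S M Sᵀ`. -/
def mutationTerm (A : Matrix n n R) (C : Matrix m n R) (B : Matrix n m R) (k : ℕ) :
    Matrix m n R :=
  (C * (∑ j ∈ range (k + 1), A ^ j) * (A - Aᵀ) + (C - Bᵀ)) * -A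

variable {A : Matrix n n R} (C : Matrix m n R) (B : Matrix n m R) (k : ℕ)

theorem mutationTerm_eq (hA : Aᵀ * A = 1) :
    mutationTerm A C B k = C - C * A ^ (k + 1) - C * A ^ (k + 2) + Bᵀ * A := by
  have hsq : (A - Aᵀ) * -A = -(A ^ 2 - 1) := by
    rw [sub_mul, mul_neg, mul_neg, hA, sq]
    abel
  rw [mutationTerm, Matrix.add_mul, Matrix.mul_assoc, Matrix.mul_assoc, hsq, mul_neg,
    geom_sum_mul_sq_sub_one]
  simp only [Matrix.mul_neg, Matrix.mul_sub, Matrix.mul_add, Matrix.mul_one, Matrix.sub_mul]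
  abel

theorem mutationTerm_of_transpose_eq (hA : Aᵀ * A = 1) (hCB : Cᵀ = A ^ (k + 1) * B) :
    mutationTerm A C B k = C - Bᵀ := by
  have hC : C * A ^ (k + 1) = Bᵀ := by
    have hcomm : Commute Aᵀ A := hA.trans (mul_eq_one_comm.mp hA).symm
    rw [← transpose_transpose C, hCB, transpose_mul, transpose_pow, Matrix.mul_assoc,
      ← hcomm.mul_pow, hA, one_pow, Matrix.mul_one]
  rw [mutationTerm_eq C B k hA, pow_succ A (k + 1), ← Matrix.mul_assoc, hC]
  abel

theorem mutationTerm_of_pow_eq_one (hA : Aᵀ * A = 1) (hk : A ^ (k + 2) = 1) :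
    mutationTerm A C B k = (A ^ (k + 1) * B)ᵀ - C * A ^ (k + 1) := by
  have hAk : A ^ (k + 1) = Aᵀ := by
    rw [← mul_one (A ^ (k + 1)), ← mul_eq_one_comm.mp hA, ← mul_assoc, ← pow_succ, hk, one_mul]
  rw [mutationTerm_eq C B k hA, hk, Matrix.mul_one, transpose_mul, hAk, transpose_transpose]
  abel

end MutationTerm

/-- In the generalized mutation `M' = S M Sᵀ`, the bottom-left block equals
`∑_{i=0}^{l-3} Cᵢ − ∑_{i=0}^{l-3} Bᵢᵀ + (A^{l-1} B_{l-2})ᵀ − C_{l-2} A^{l-1}`. -/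
theorem mut_block_bottomleft (l : ℕ) (hl : 3 ≤ l) [NeZero l]
    {m : Type} [Fintype m] [DecidableEq m]
    (Bf : ℕ → Matrix (Fin l) m ℤ) (Cf : ℕ → Matrix m (Fin l) ℤ)
    (D : Matrix m m ℤ)
    (hrel : ∀ i ≤ l - 3, (Cf i)ᵀ = cyc l ^ (i + 1) * Bf i) :
    let A := cyc l
    let B := ∑ i ∈ Finset.range (l - 1), Bf i
    let C := ∑ i ∈ Finset.range (l - 1), Cf i
    let M := fromBlocks (A - Aᵀ) (B - Cᵀ) (C - Bᵀ) (D - Dᵀ)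
    let S := fromBlocks (-A⁻¹) 0
      (∑ i ∈ Finset.range (l - 1), Cf i * ∑ j ∈ Finset.range (i + 1), A ^ j) 1
    (S * M * Sᵀ).toBlocks₂₁ =
      (∑ i ∈ Finset.range (l - 2), Cf i) - (∑ i ∈ Finset.range (l - 2), (Bf i)ᵀ) +
        (A ^ (l - 1) * Bf (l - 2))ᵀ - Cf (l - 2) * A ^ (l - 1) := by
  intro A B C M S
  have hA : Aᵀ * A = 1 := transpose_cyc_mul_cyc l
  have hblock : (S * M * Sᵀ).toBlocks₂₁ = ∑ i ∈ range (l - 1), mutationTerm A (Cf i) (Bf i) i := by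
    simp only [S, M, mutationTerm, fromBlocks_mul_mul_transpose_toBlocks₂₁, inv_eq_left_inv hA,
      transpose_neg, transpose_transpose, ← Matrix.sum_mul]
    congr 1
    simp only [B, C, transpose_sum, Matrix.sum_mul, sum_add_distrib, sum_sub_distrib]
  have hinit : ∀ i ∈ range (l - 2), mutationTerm A (Cf i) (Bf i) i = Cf i - (Bf i)ᵀ :=
    fun i hi => mutationTerm_of_transpose_eq _ _ _ hA (hrel i (by rw [mem_range] at hi; omega))
  have hlast : A ^ (l - 2 + 2) = 1 := by
    rw [Nat.sub_add_cancel (by omega)]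
    exact cyc_pow_self l
  rw [hblock, show l - 1 = l - 2 + 1 by omega, sum_range_succ, sum_congr rfl hinit,
    mutationTerm_of_pow_eq_one _ _ _ hA hlast, sum_sub_distrib, add_sub_assoc]
end
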